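/- Let q be a prime power and Γ := SL₂(𝔽_q[X,X⁻¹]). Then Γ does not have property RD with respect to any proper length function: for every length function L on Γ with finite sublevel sets, there is no polynomial P with real coefficients such that ⦀f⦀ ≤ P(L(f))·‖f‖₂ for all finitely supported f : Γ → ℂ. -/

import Mathlib

open scoped MatrixGroups

namespace Stmt16

variable {G : Type*} [Group G]

/-- Convolution of a finitely supported function with an arbitrary function. -/
noncomputable def conv (f : G →₀ ℂ) (ξ : G → ℂ) : G → ℂ :=
  fun g => ∑ h ∈ f.support, f h * ξ (h⁻¹ * g)

/-- The operator norm of the convolution operator `ξ ↦ f * ξ` on `ℓ²(G)` is at most `C`. -/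
noncomputable def ConvOpNormLE (f : G →₀ ℂ) (C : ℝ) : Prop :=
  ∀ ξ : lp (fun _ : G => ℂ) 2, ∃ hmem : Memℓp (conv f (ξ : ∀ _ : G, ℂ)) 2,
    ‖(⟨conv f (ξ : ∀ _ : G, ℂ), hmem⟩ : lp (fun _ : G => ℂ) 2)‖ ≤ C * ‖ξ‖

/-- The ℓ²-norm of a finitely supported function. -/
noncomputable def l2norm (f : G →₀ ℂ) : ℝ :=
  Real.sqrt (∑ g ∈ f.support, ‖f g‖ ^ 2)

/-- `L(f) = max {L g : f g ≠ 0}`. -/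
noncomputable def lenOf (L : G → ℝ) (f : G →₀ ℂ) : ℝ :=
  sSup (L '' {g | f g ≠ 0})

def IsLengthFun (L : G → ℝ) : Prop :=
  L 1 = 0 ∧ (∀ g, 0 ≤ L g) ∧ (∀ g, L g⁻¹ = L g) ∧ ∀ g h, L (g * h) ≤ L g + L h

/-- Property RD with respect to `L`. -/
def HasRD (L : G → ℝ) : Prop :=
  ∃ P : Polynomial ℝ, ∀ f : G →₀ ℂ,
    ConvOpNormLE f (P.eval (lenOf L f) * l2norm f)

end Stmt16

/-!
Polynomials of degree `< n` embed in `SL₂(𝔽_q[T,T⁻¹])` as the abelian subgroup of upper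
unitriangular matrices `!![1, p; 0, 1]`, of order `qⁿ`. Convolving the indicator of a finite
subgroup `H` with itself multiplies it by `|H|`, so property RD forces
`√|H| ≤ P (max_{h ∈ H} L h)`. Conjugation by `diag (T, T⁻¹)` multiplies the upper right entry
by `T²`, so the monomial `c Tⁱ` has length `O(i)` and the whole subgroup has length `O(n²)`:
its order grows exponentially in `n` while RD only allows polynomial growth.
-/

namespace Polynomial

theorem exists_monotone_majorant (P : ℝ[X]) :
    ∃ Q : ℝ[X], ∀ x y : ℝ, 0 ≤ x → x ≤ y → P.eval x ≤ Q.eval y := by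
  refine ⟨∑ i ∈ Finset.range (P.natDegree + 1), C |P.coeff i| * X ^ i, fun x y hx hxy => ?_⟩
  rw [eval_eq_sum_range, eval_finsetSum]
  refine Finset.sum_le_sum fun i _ => ?_
  simp only [eval_mul, eval_C, eval_pow, eval_X]
  calc P.coeff i * x ^ i ≤ |P.coeff i| * x ^ i := by gcongr; exact le_abs_self _
    _ ≤ |P.coeff i| * y ^ i := by gcongr

theorem exists_eval_natCast_lt_pow (P : ℝ[X]) {K : ℝ} (hK : 1 < K) :
    ∃ n : ℕ, P.eval (n : ℝ) < K ^ n := by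
  have hP : (fun n : ℕ => P.eval (n : ℝ)) =o[Filter.atTop] fun n => K ^ n :=
    ((P.isBigO_atTop_of_degree_le (X ^ P.natDegree) (by simp [degree_le_natDegree])).comp_tendsto
      tendsto_natCast_atTop_atTop).trans_isLittleO
      (by simpa [Function.comp_def] using isLittleO_pow_const_const_pow_of_one_lt P.natDegree hK)
  obtain ⟨n, hn⟩ := (hP.bound one_half_pos).exists
  refine ⟨n, (le_abs_self _).trans_lt (hn.trans_lt ?_)⟩
  have hKn : 0 < K ^ n := pow_pos (zero_lt_one.trans hK) n
  rw [Real.norm_of_nonneg hKn.le]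
  linarith

end Polynomial

namespace Stmt16

variable {G : Type*} [Group G] {L : G → ℝ}

namespace IsLengthFun

variable (hL : IsLengthFun L)
include hL

theorem map_one : L 1 = 0 := hL.1

theorem nonneg (g : G) : 0 ≤ L g := hL.2.1 g

theorem map_inv (g : G) : L g⁻¹ = L g := hL.2.2.1 g

theorem map_mul_le (g h : G) : L (g * h) ≤ L g + L h := hL.2.2.2 g h

theorem map_pow_le (g : G) (m : ℕ) : L (g ^ m) ≤ m * L g := by
  induction m with
  | zero => simp [hL.map_one]
  | succ m ih =>
    calc L (g ^ (m + 1)) ≤ L (g ^ m) + L g := pow_succ g m ▸ hL.map_mul_le _ _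
      _ ≤ (m + 1 : ℕ) * L g := by push_cast; linarith

theorem map_conj_le (g h : G) : L (g * h * g⁻¹) ≤ 2 * L g + L h := by
  have := hL.map_mul_le (g * h) g⁻¹
  have := hL.map_mul_le g h
  linarith [hL.map_inv g]

end IsLengthFun

noncomputable def finiteIndicator {s : Set G} (hs : s.Finite) : G →₀ ℂ where
  support := hs.toFinset
  toFun := s.indicator 1
  mem_support_toFun g := by simp

section

variable {H : Subgroup G} (hH : (H : Set G).Finite)

theorem card_support_finiteIndicator : (finiteIndicator hH).support.card = Nat.card H :=
  (Nat.card_eq_card_finite_toFinset hH).symm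

theorem conv_finiteIndicator :
    conv (finiteIndicator hH) ((H : Set G).indicator 1) =
      (Nat.card H : ℂ) • (H : Set G).indicator 1 := by
  classical
  ext g
  have hterm (h : G) (hh : h ∈ (finiteIndicator hH).support) :
      finiteIndicator hH h * (H : Set G).indicator 1 (h⁻¹ * g) = (H : Set G).indicator 1 g := by
    replace hh : h ∈ H := hH.mem_toFinset.mp hh
    simp [finiteIndicator, Set.indicator_of_mem, hh, Set.indicator_apply,
      H.mul_mem_cancel_left (H.inv_mem hh)]
  rw [conv, Finset.sum_congr rfl hterm, Finset.sum_const, nsmul_eq_mul,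
    card_support_finiteIndicator]
  rfl

theorem card_le_of_convOpNormLE {C : ℝ} (hC : ConvOpNormLE (finiteIndicator hH) C) :
    (Nat.card H : ℝ) ≤ C := by
  have hmem : Memℓp ((H : Set G).indicator (1 : G → ℂ)) 2 :=
    (memℓp_zero (hH.subset fun g hg => by
      by_contra h; exact hg (Set.indicator_of_notMem h _))).of_exponent_ge (by norm_num)
  set ξ : lp (fun _ : G => ℂ) 2 := ⟨_, hmem⟩
  have hξ : 0 < ‖ξ‖ := by
    refine norm_pos_iff.mpr fun h0 => ?_
    have := congrArg (fun v : lp (fun _ : G => ℂ) 2 => (v : G → ℂ) 1) h0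
    simp [ξ, H.one_mem] at this
  obtain ⟨hconv, hle⟩ := hC ξ
  have : (⟨_, hconv⟩ : lp (fun _ : G => ℂ) 2) = (Nat.card H : ℂ) • ξ :=
    Subtype.ext (conv_finiteIndicator hH)
  rw [this, norm_smul, Complex.norm_natCast] at hle
  exact le_of_mul_le_mul_right hle hξ

theorem l2norm_finiteIndicator : l2norm (finiteIndicator hH) = √(Nat.card H) := by
  rw [l2norm, ← card_support_finiteIndicator hH]
  congr 1
  rw [Finset.card_eq_sum_ones, Nat.cast_sum]
  refine Finset.sum_congr rfl fun g hg => ?_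
  simp [finiteIndicator, Set.indicator_of_mem (hH.mem_toFinset.mp hg)]

theorem lenOf_finiteIndicator_mem_Icc (hL : ∀ g, 0 ≤ L g) {B : ℝ} (hB : ∀ h ∈ H, L h ≤ B) :
    lenOf L (finiteIndicator hH) ∈ Set.Icc 0 B := by
  have hsupp : {g | finiteIndicator hH g ≠ 0} = H := by
    ext g; simp [finiteIndicator]
  rw [lenOf, hsupp]
  refine ⟨Real.sSup_nonneg ?_, Real.sSup_le ?_ ((hL 1).trans (hB 1 H.one_mem))⟩
  · rintro _ ⟨g, -, rfl⟩; exact hL g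
  · rintro _ ⟨g, hg, rfl⟩; exact hB g hg

end

theorem HasRD.exists_sqrt_card_le (hL : ∀ g, 0 ≤ L g) (hRD : HasRD L) :
    ∃ Q : Polynomial ℝ, ∀ (H : Subgroup G), (H : Set G).Finite → ∀ B : ℝ,
      (∀ h ∈ H, L h ≤ B) → √(Nat.card H) ≤ Q.eval B := by
  obtain ⟨P, hP⟩ := hRD
  obtain ⟨Q, hQ⟩ := P.exists_monotone_majorant
  refine ⟨Q, fun H hH B hB => ?_⟩
  have hcard := card_le_of_convOpNormLE hH (hP (finiteIndicator hH))
  rw [l2norm_finiteIndicator] at hcard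
  have : Finite H := hH.to_subtype
  have hpos : 0 < √(Nat.card H : ℝ) := Real.sqrt_pos.mpr (by exact_mod_cast Nat.card_pos)
  have hsqrt : √(Nat.card H : ℝ) ≤ P.eval (lenOf L (finiteIndicator hH)) :=
    le_of_mul_le_mul_right ((Real.mul_self_sqrt (Nat.cast_nonneg _)).trans_le hcard) hpos
  obtain ⟨h0, hB⟩ := lenOf_finiteIndicator_mem_Icc hH hL hB
  exact hsqrt.trans (hQ _ _ h0 hB)

end Stmt16

namespace Matrix.SpecialLinearGroup

variable {R : Type*} [CommRing R]

def upperRightHom : AddChar R SL(2, R) where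
  toFun x := ⟨!![1, x; 0, 1], by simp⟩
  map_zero_eq_one' := Subtype.ext (one_fin_two).symm
  map_add_eq_mul' a b := Subtype.ext <|
    show !![1, a + b; 0, 1] = !![1, a; 0, 1] * !![1, b; 0, 1] by simp [add_comm]

@[simp]
theorem coe_upperRightHom (x : R) : (upperRightHom x : Matrix (Fin 2) (Fin 2) R) = !![1, x; 0, 1] :=
  rfl

theorem injective_upperRightHom : Function.Injective (upperRightHom (R := R)) := fun a b h => by
  simpa using congrArg (fun g : SL(2, R) => g 0 1) h

def diagUnitsHom : Rˣ →* SL(2, R) where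
  toFun a := ⟨!![(a : R), 0; 0, (a⁻¹ : Rˣ)], by simp⟩
  map_one' := Subtype.ext <| by simp [one_fin_two]
  map_mul' a b := Subtype.ext <|
    show !![((a * b : Rˣ) : R), 0; 0, ((a * b)⁻¹ : Rˣ)] =
      !![(a : R), 0; 0, (a⁻¹ : Rˣ)] * !![(b : R), 0; 0, (b⁻¹ : Rˣ)] by
      simp [mul_comm]

@[simp]
theorem coe_diagUnitsHom (a : Rˣ) :
    (diagUnitsHom a : Matrix (Fin 2) (Fin 2) R) = !![(a : R), 0; 0, (a⁻¹ : Rˣ)] :=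
  rfl

theorem diagUnitsHom_conj_upperRightHom (a : Rˣ) (x : R) :
    diagUnitsHom a * upperRightHom x * (diagUnitsHom a)⁻¹ = upperRightHom ((a : R) ^ 2 * x) := by
  rw [← map_inv]
  ext : 1
  simp [sq, mul_comm, mul_left_comm]

end Matrix.SpecialLinearGroup

namespace LaurentPolynomial

open Matrix.SpecialLinearGroup
open Polynomial (degreeLT degreeLTEquiv toLaurent)

variable {F : Type*} [CommRing F]

noncomputable def diagT : SL(2, F[T;T⁻¹]) := diagUnitsHom (isUnit_T 1).unit

theorem upperRightHom_C_mul_T_eq_conj (c : F) (r m : ℕ) :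
    upperRightHom (C c * T (r + 2 * m : ℕ)) =
      diagT ^ m * upperRightHom (C c * T r) * (diagT ^ m)⁻¹ := by
  have hT : (((isUnit_T 1).unit ^ m : F[T;T⁻¹]ˣ) : F[T;T⁻¹]) ^ 2 = T (2 * m) := by
    simp [Units.val_pow_eq_pow_val, T_pow, mul_comm]
  rw [diagT, ← map_pow, diagUnitsHom_conj_upperRightHom, hT, mul_left_comm, ← T_add]
  push_cast
  rw [add_comm]

variable (F) in
noncomputable def upperRightDegreeLT (n : ℕ) : Subgroup SL(2, F[T;T⁻¹]) :=
  (upperRightHom.compAddMonoidHom ((toLaurent : Polynomial F →+* F[T;T⁻¹]).toAddMonoidHom.comp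
    ((degreeLT F n).subtype.toAddMonoidHom.comp
      (degreeLTEquiv F n).symm.toAddMonoidHom))).toMonoidHom.range

theorem finite_upperRightDegreeLT [Finite F] (n : ℕ) :
    (upperRightDegreeLT F n : Set SL(2, F[T;T⁻¹])).Finite := by
  rw [upperRightDegreeLT, MonoidHom.coe_range]
  exact Set.finite_range _

theorem card_upperRightDegreeLT (n : ℕ) : Nat.card (upperRightDegreeLT F n) = Nat.card F ^ n := by
  rw [upperRightDegreeLT, ← Nat.card_congr (MonoidHom.ofInjective _).toEquiv]
  · rw [Nat.card_congr Multiplicative.toAdd, Nat.card_fun, Nat.card_fin]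
  · exact injective_upperRightHom.comp <| Polynomial.toLaurent_injective.comp <|
      Subtype.val_injective.comp (degreeLTEquiv F n).symm.injective

section Length

variable [Fintype F] {L : SL(2, F[T;T⁻¹]) → ℝ} (hL : Stmt16.IsLengthFun L)
include hL

theorem exists_length_upperRightHom_C_mul_T_le :
    ∃ D M : ℝ, 0 ≤ D ∧ ∀ (c : F) (i : ℕ), L (upperRightHom (C c * T i)) ≤ i * D + M := by
  refine ⟨L diagT, ∑ c : F, ∑ r ∈ Finset.range 2, L (upperRightHom (C c * T r)),
    hL.nonneg _, fun c i => ?_⟩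
  have hsmall : L (upperRightHom (C c * T (i % 2 : ℕ))) ≤
      ∑ c : F, ∑ r ∈ Finset.range 2, L (upperRightHom (C c * T r)) :=
    (Finset.single_le_sum (f := fun r : ℕ => L (upperRightHom (C c * T r)))
        (fun r _ => hL.nonneg _) (Finset.mem_range.mpr (Nat.mod_lt i two_pos))).trans
      (Finset.single_le_sum (f := fun c => ∑ r ∈ Finset.range 2, L (upperRightHom (C c * T r)))
        (fun c _ => Finset.sum_nonneg fun r _ => hL.nonneg _) (Finset.mem_univ c))
  have hi : 2 * ((i / 2 : ℕ) * L diagT) ≤ i * L diagT := by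
    rw [← mul_assoc]
    exact mul_le_mul_of_nonneg_right (by exact_mod_cast Nat.mul_div_le i 2) (hL.nonneg _)
  rw [← Nat.mod_add_div i 2, upperRightHom_C_mul_T_eq_conj]
  calc _ ≤ 2 * L (diagT ^ (i / 2)) + L (upperRightHom (C c * T (i % 2 : ℕ))) :=
        hL.map_conj_le _ _
    _ ≤ 2 * ((i / 2 : ℕ) * L diagT) + _ := by gcongr; exact hL.map_pow_le _ _
    _ ≤ _ := by rw [Nat.mod_add_div]; linarith

theorem exists_length_le_of_mem_upperRightDegreeLT :
    ∃ B : Polynomial ℝ, ∀ n, ∀ g ∈ upperRightDegreeLT F n, L g ≤ B.eval (n : ℝ) := by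
  obtain ⟨D, M, hD, hmono⟩ := exists_length_upperRightHom_C_mul_T_le hL
  refine ⟨(Polynomial.X + 1) * (Polynomial.X * Polynomial.C D + Polynomial.C M), fun n g hg => ?_⟩
  obtain ⟨c, rfl⟩ := hg
  set p : Polynomial F := ((degreeLTEquiv F n).symm c : Polynomial F)
  have hp : p.natDegree < n + 1 := Nat.lt_succ_of_le <| Polynomial.natDegree_le_of_degree_le
    (Polynomial.mem_degreeLT.mp ((degreeLTEquiv F n).symm c).2).le
  have hsum := Finset.le_sum_of_subadditive (fun x => L (upperRightHom x)) (by simp [hL.map_one])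
    (fun x y => by simpa [AddChar.map_add_eq_mul] using hL.map_mul_le _ _) (Finset.range (n + 1))
    (fun i => toLaurent (Polynomial.monomial i (p.coeff i)))
  rw [← map_sum, ← p.as_sum_range' _ hp] at hsum
  calc L _ = L (upperRightHom (toLaurent p)) := rfl
    _ ≤ ∑ i ∈ Finset.range (n + 1), (n * D + M) := hsum.trans <| Finset.sum_le_sum fun i hi => by
        rw [Polynomial.toLaurent_C_mul_T]
        refine (hmono _ i).trans ?_
        have : (i : ℝ) ≤ n := by exact_mod_cast Finset.mem_range_succ_iff.mp hi
        gcongr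
    _ = _ := by
        simp only [Finset.sum_const, Finset.card_range, nsmul_eq_mul, Polynomial.eval_mul,
          Polynomial.eval_add, Polynomial.eval_X, Polynomial.eval_one, Polynomial.eval_C]
        push_cast
        ring

end Length

end LaurentPolynomial

theorem statement16 (F : Type*) [Field F] [Fintype F]
    (L : SL(2, LaurentPolynomial F) → ℝ)
    (hlen : Stmt16.IsLengthFun L) :
    ¬ Stmt16.HasRD L := by
  intro hRD
  obtain ⟨Q, hQ⟩ := hRD.exists_sqrt_card_le hlen.nonneg
  obtain ⟨B, hB⟩ := LaurentPolynomial.exists_length_le_of_mem_upperRightDegreeLT hlen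
  have hq : 1 < √(Nat.card F : ℝ) := by
    rw [Real.lt_sqrt zero_le_one, one_pow, Nat.one_lt_cast]
    exact Finite.one_lt_card
  obtain ⟨n, hn⟩ := (Q.comp B).exists_eval_natCast_lt_pow hq
  have hsqrt :
      √(Nat.card F : ℝ) ^ n = √(Nat.card (LaurentPolynomial.upperRightDegreeLT F n) : ℝ) := by
    rw [LaurentPolynomial.card_upperRightDegreeLT, Nat.cast_pow, eq_comm,
      Real.sqrt_eq_iff_eq_sq (by positivity) (by positivity), ← pow_mul, mul_comm, pow_mul,
      Real.sq_sqrt (Nat.cast_nonneg _)]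
  have := hQ _ (LaurentPolynomial.finite_upperRightDegreeLT n) _ (hB n)
  rw [Polynomial.eval_comp] at hn
  linarith
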